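/- Write r1 ≡ r2 for SL* ⊢ r1 = r2 and [r]_≡ for the ≡-equivalence class of r. There is a unique transition function [δ]_≡ : StExp/≡ → P(Act × (✓ + StExp/≡)) such that the quotient map [−]_≡ : StExp → StExp/≡ is a chart homomorphism from the syntactic chart (StExp, δ) to (StExp/≡, [δ]_≡). -/
import Mathlib


/-- A chart over action alphabet `Act` with state space `X`: each state is assigned a
finite set of transitions, either `(a, none)` (i.e. `x →a ✓`) or `(a, some y)` (i.e. `x →a y`). -/
structure Chart (Act X : Type) where
  tr : X → Finset (Act × Option X)

/-- `x →a ✓` in the chart `C`. -/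
def Chart.Halts {Act X : Type} (C : Chart Act X) (x : X) : Prop :=
  ∃ a : Act, (a, (none : Option X)) ∈ C.tr x

/-- `x → y` (for some action) in the chart `C`. -/
def Chart.StepRel {Act X : Type} (C : Chart Act X) (x y : X) : Prop :=
  ∃ a : Act, (a, some y) ∈ C.tr x

/-- `R` is a bisimulation between the charts `C` and `D`. -/
def IsBisim {Act X Y : Type} (C : Chart Act X) (D : Chart Act Y) (R : X → Y → Prop) : Prop :=
  ∀ x y, R x y → ∀ a : Act,
    (((a, (none : Option X)) ∈ C.tr x) ↔ ((a, (none : Option Y)) ∈ D.tr y)) ∧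
    (∀ x', (a, some x') ∈ C.tr x → ∃ y', (a, some y') ∈ D.tr y ∧ R x' y') ∧
    (∀ y', (a, some y') ∈ D.tr y → ∃ x', (a, some x') ∈ C.tr x ∧ R x' y')

/-- States `x` of `C` and `y` of `D` are bisimilar. -/
def Bisimilar {Act X Y : Type} (C : Chart Act X) (D : Chart Act Y) (x : X) (y : Y) : Prop :=
  ∃ R, IsBisim C D R ∧ R x y

/-- A chart homomorphism is a function whose graph is a bisimulation. -/
def IsChartHom {Act X Y : Type} (C : Chart Act X) (D : Chart Act Y) (h : X → Y) : Prop :=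
  IsBisim C D (fun x y => h x = y)

/-- 1-free star expressions over the alphabet `Act`. -/
inductive StExp (Act : Type) : Type where
  | zero : StExp Act
  | act : Act → StExp Act
  | add : StExp Act → StExp Act → StExp Act
  | mul : StExp Act → StExp Act → StExp Act
  | star : StExp Act → StExp Act → StExp Act
deriving DecidableEq

/-- Continuation after a transition of the left operand: `✓` continues as `s`,
and a state `t` continues as `t·s`. -/
def StExp.seqAfter {Act : Type} (s : StExp Act) : Option (StExp Act) → StExp Act
  | none => s
  | some t => t.mul s

/-- The transition function of the syntactic chart, following Antimirov-style rules. -/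
def StExp.tr {Act : Type} [DecidableEq Act] : StExp Act → Finset (Act × Option (StExp Act))
  | .zero => ∅
  | .act a => {(a, none)}
  | .add r s => r.tr ∪ s.tr
  | .mul r s => r.tr.image (fun p => (p.1, some (StExp.seqAfter s p.2)))
  | .star r s =>
      (r.tr.image (fun p => (p.1, some (StExp.seqAfter (StExp.star r s) p.2)))) ∪ s.tr

/-- The syntactic chart `(StExp, δ)`. -/
def synChart (Act : Type) [DecidableEq Act] : Chart Act (StExp Act) := ⟨StExp.tr⟩

/-- Derivability `SL* ⊢ r = s` from Grabmayer and Fokkink's axioms together with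
the laws of equational logic. -/
inductive SLEq {Act : Type} : StExp Act → StExp Act → Prop where
  | add_comm (x y : StExp Act) : SLEq (x.add y) (y.add x)
  | add_assoc (x y z : StExp Act) : SLEq ((x.add y).add z) (x.add (y.add z))
  | add_idem (x : StExp Act) : SLEq (x.add x) x
  | add_zero (x : StExp Act) : SLEq (x.add .zero) x
  | right_distrib (x y z : StExp Act) : SLEq ((x.add y).mul z) ((x.mul z).add (y.mul z))
  | mul_assoc (x y z : StExp Act) : SLEq ((x.mul y).mul z) (x.mul (y.mul z))
  | zero_mul (x : StExp Act) : SLEq (StExp.zero.mul x) .zero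
  | star_unfold (x y : StExp Act) : SLEq (x.star y) ((x.mul (x.star y)).add y)
  | fixpoint {x y z : StExp Act} : SLEq x ((y.mul x).add z) → SLEq x (y.star z)
  | refl (x : StExp Act) : SLEq x x
  | symm {x y : StExp Act} : SLEq x y → SLEq y x
  | trans {x y z : StExp Act} : SLEq x y → SLEq y z → SLEq x z
  | add_congr {x x' y y' : StExp Act} : SLEq x x' → SLEq y y' → SLEq (x.add y) (x'.add y')
  | mul_congr {x x' y y' : StExp Act} : SLEq x x' → SLEq y y' → SLEq (x.mul y) (x'.mul y')
  | star_congr {x x' y y' : StExp Act} : SLEq x x' → SLEq y y' → SLEq (x.star y) (x'.star y')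

/-- Provable equivalence `≡` as a setoid on `StExp`. -/
def slSetoid (Act : Type) : Setoid (StExp Act) :=
  ⟨SLEq, ⟨fun x => SLEq.refl x, fun h => SLEq.symm h, fun h h' => SLEq.trans h h'⟩⟩

section Aux

variable {Act : Type} [DecidableEq Act]

attribute [local instance] Classical.propDecidable

set_option linter.unusedSectionVars false

/-- Quotient map. -/
def qk : StExp Act → Quotient (slSetoid Act) := Quotient.mk (slSetoid Act)

/-- Multiplication on the quotient. -/
noncomputable def qmul : Quotient (slSetoid Act) → Quotient (slSetoid Act) → Quotient (slSetoid Act) :=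
  Quotient.lift₂ (fun a b => qk (a.mul b))
    (fun _ _ _ _ h h' => Quotient.sound (SLEq.mul_congr h h'))

theorem qmul_assoc (a b c : Quotient (slSetoid Act)) :
    qmul (qmul a b) c = qmul a (qmul b c) := by
  induction a using Quotient.ind
  induction b using Quotient.ind
  induction c using Quotient.ind
  exact Quotient.sound (SLEq.mul_assoc _ _ _)

/-- Post-composition with a quotient class on transition targets. -/
noncomputable def mQ (q : Quotient (slSetoid Act)) :
    Act × Option (Quotient (slSetoid Act)) → Act × Option (Quotient (slSetoid Act)) :=
  fun p => (p.1, some (match p.2 with | none => q | some t => qmul t q))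

theorem mQ_comp (q q' : Quotient (slSetoid Act))
    (p : Act × Option (Quotient (slSetoid Act))) : mQ q' (mQ q p) = mQ (qmul q q') p := by
  obtain ⟨a, ξ⟩ := p
  cases ξ with
  | none => rfl
  | some t => simp [mQ, qmul_assoc]

/-- Transitions of `r`, with targets quotiented. -/
noncomputable def T (r : StExp Act) : Finset (Act × Option (Quotient (slSetoid Act))) :=
  r.tr.image (fun p => (p.1, p.2.map qk))

theorem T_zero : T (StExp.zero : StExp Act) = ∅ := rfl

theorem T_add (r s : StExp Act) : T (r.add s) = T r ∪ T s := by
  simp [T, StExp.tr, Finset.image_union]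

theorem T_mul (r s : StExp Act) : T (r.mul s) = (T r).image (mQ (qk s)) := by
  simp only [T, StExp.tr, Finset.image_image]
  apply Finset.image_congr
  rintro ⟨a, ξ⟩ -
  cases ξ with
  | none => rfl
  | some t => rfl

theorem T_star (r s : StExp Act) :
    T (r.star s) = (T r).image (mQ (qk (r.star s))) ∪ T s := by
  simp only [T, StExp.tr, Finset.image_union, Finset.image_image]
  congr 1
  apply Finset.image_congr
  rintro ⟨a, ξ⟩ -
  cases ξ with
  | none => rfl
  | some t => rfl

theorem T_eq {r s : StExp Act} (h : SLEq r s) : T r = T s := by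
  induction h with
  | add_comm x y => rw [T_add, T_add, Finset.union_comm]
  | add_assoc x y z => rw [T_add, T_add, T_add, T_add, Finset.union_assoc]
  | add_idem x => rw [T_add, Finset.union_self]
  | add_zero x => rw [T_add, T_zero, Finset.union_empty]
  | right_distrib x y z =>
      rw [T_mul, T_add, T_add, T_mul, T_mul, Finset.image_union]
  | mul_assoc x y z =>
      rw [T_mul, T_mul, T_mul, Finset.image_image]
      have : qk (y.mul z) = qmul (qk y) (qk z) := rfl
      rw [this]
      exact Finset.image_congr (fun p _ => mQ_comp _ _ p)
  | zero_mul x => rw [T_mul, T_zero, Finset.image_empty]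
  | star_unfold x y => rw [T_star, T_add, T_mul]
  | fixpoint h ih =>
      rename_i x y z
      have hx : qk x = qk (y.star z) := Quotient.sound (SLEq.fixpoint h)
      rw [ih, T_add, T_mul, hx, ← T_star]
  | refl x => rfl
  | symm _ ih => exact ih.symm
  | trans _ _ ih ih' => exact ih.trans ih'
  | add_congr _ _ ih ih' => rw [T_add, T_add, ih, ih']
  | mul_congr hx hy ihx ihy =>
      rw [T_mul, T_mul, ihx, show qk _ = qk _ from Quotient.sound hy]
  | star_congr hx hy ihx ihy =>
      rw [T_star, T_star, ihx, ihy,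
        show qk _ = qk _ from Quotient.sound (SLEq.star_congr hx hy)]

theorem mem_T_none {r : StExp Act} {a : Act} :
    (a, (none : Option (Quotient (slSetoid Act)))) ∈ T r ↔
      (a, (none : Option (StExp Act))) ∈ r.tr := by
  simp only [T, Finset.mem_image]
  constructor
  · rintro ⟨⟨b, ξ⟩, hmem, heq⟩
    cases ξ with
    | none =>
        obtain ⟨rfl, -⟩ := Prod.mk.injEq .. ▸ heq
        exact hmem
    | some t => simp [Prod.ext_iff] at heq
  · intro h
    exact ⟨(a, none), h, rfl⟩

theorem mem_T_some {r : StExp Act} {a : Act} {q : Quotient (slSetoid Act)} :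
    (a, some q) ∈ T r ↔ ∃ x', (a, some x') ∈ r.tr ∧ qk x' = q := by
  simp only [T, Finset.mem_image]
  constructor
  · rintro ⟨⟨b, ξ⟩, hmem, heq⟩
    cases ξ with
    | none => simp [Prod.ext_iff] at heq
    | some t =>
        obtain ⟨h1, h2⟩ := Prod.mk.injEq .. ▸ heq
        subst h1
        exact ⟨t, hmem, by simpa using h2⟩
  · rintro ⟨x', hmem, rfl⟩
    exact ⟨(a, some x'), hmem, rfl⟩

end Aux

/-- There is a unique chart structure on the quotient `StExp/≡` such that the quotient map
`[−]_≡ : StExp → StExp/≡` is a chart homomorphism from the syntactic chart. -/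
theorem exists_unique_quotient_chart (Act : Type) [DecidableEq Act] :
    ∃! E : Chart Act (Quotient (slSetoid Act)),
      IsChartHom (synChart Act) E (Quotient.mk (slSetoid Act)) := by
  refine ⟨⟨Quotient.lift T (fun _ _ h => T_eq h)⟩, ?_, ?_⟩
  · rintro x y rfl a
    refine ⟨?_, ?_, ?_⟩
    · exact mem_T_none.symm
    · intro x' hx'
      exact ⟨qk x', mem_T_some.mpr ⟨x', hx', rfl⟩, rfl⟩
    · intro q hq
      obtain ⟨x', hmem, hqk⟩ := mem_T_some.mp hq
      exact ⟨x', hmem, hqk⟩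
  · rintro ⟨tr'⟩ hhom
    congr 1
    funext q
    induction q using Quotient.ind with
    | _ x =>
      have h := hhom x _ rfl
      ext ⟨a, ξ⟩
      cases ξ with
      | none =>
          rw [show (Quotient.lift T (fun _ _ h => T_eq h) (Quotient.mk (slSetoid Act) x)) = T x
            from rfl, mem_T_none]
          exact (h a).1.symm
      | some q' =>
          rw [show (Quotient.lift T (fun _ _ h => T_eq h) (Quotient.mk (slSetoid Act) x)) = T x
            from rfl, mem_T_some]
          constructor
          · intro hmem
            obtain ⟨r, hr, hrq⟩ := (h a).2.2 q' hmem
            exact ⟨r, hr, hrq⟩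
          · rintro ⟨x', hx', rfl⟩
            obtain ⟨y', hy', rfl⟩ := (h a).2.1 x' hx'
            exact hy'
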